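/- Let u be a tempered generalized stochastic process on ℝᵈ and let ν : ℝᵈ → [0,∞) be continuous and polynomially bounded, with E( (u,φ)·conj((u,ψ)) ) = ∫_{ℝᵈ} ψ(x)·conj(φ(x))·ν(−x) dx for all φ, ψ ∈ 𝒮(ℝᵈ;ℂ) (u is frequency stationary: its covariance operator is multiplication by x ↦ ν(−x)). Then for all f, g ∈ 𝒮(ℝᵈ;ℂ): E( (u,f)·conj((u,g)) ) = (2π)^{-d/2} ∫_{ℝ²ᵈ} ν(−x)·conj( W(f,g)(x,ξ) ) dx dξ; that is, the Wigner spectrum of u equals (2π)^{-d/2}·(ν∘(−id) ⊗ 1). -/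

import Mathlib

open MeasureTheory ProbabilityTheory ComplexConjugate

noncomputable section

/-- `ℝᵈ` as a Euclidean space. -/
abbrev Ed (d : ℕ) := EuclideanSpace ℝ (Fin d)

/-- The cross-Wigner distribution of two Schwartz functions on `ℝᵈ`:
`W(f,g)(x,ξ) = (2π)^{-d/2} ∫ f(x+y/2) conj(g(x−y/2)) e^{-i⟨y,ξ⟩} dy`. -/
def wig {d : ℕ} (f g : SchwartzMap (Ed d) ℂ) (x ξ : Ed d) : ℂ :=
  (((2 * Real.pi) ^ (-(d : ℝ) / 2) : ℝ) : ℂ) *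
    ∫ y : Ed d, f (x + (2 : ℝ)⁻¹ • y) * conj (g (x - (2 : ℝ)⁻¹ • y)) *
      Complex.exp (-((inner ℝ y ξ : ℝ) : ℂ) * Complex.I)

/-! For fixed `x`, `ξ ↦ W(f,g)(x,ξ)` is `(2π)^{-d/2}` times the Fourier transform, taken at
`ξ / 2π`, of the Schwartz function `y ↦ f(x + y/2) conj(g(x − y/2))`. Fourier inversion at
`y = 0` therefore gives `∫ W(f,g)(x,ξ) dξ = (2π)^{d/2} f(x) conj(g(x))`, so the right-hand side
equals `∫ g(x) conj(f(x)) ν(−x) dx` pointwise in `x`, which is the covariance of `u` by frequency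
stationarity. -/

open FourierTransform SchwartzMap
open scoped RealInnerProductSpace

lemma antilipschitzWith_const_add_smul {V : Type*} [NormedAddCommGroup V] [NormedSpace ℝ V]
    (x : V) {a : ℝ} (ha : a ≠ 0) : AntilipschitzWith ‖a‖₊⁻¹ (fun y : V => x + a • y) :=
  AntilipschitzWith.of_le_mul_dist fun y z => by
    rw [dist_add_left, dist_smul₀, NNReal.coe_inv, coe_nnnorm,
      inv_mul_cancel_left₀ (norm_ne_zero_iff.mpr ha)]

namespace SchwartzMap

section Wigner
variable {V : Type*} [NormedAddCommGroup V] [NormedSpace ℝ V]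

def wignerKernel (f g : 𝓢(V, ℂ)) (x : V) : 𝓢(V, ℂ) :=
  smulLeftCLM ℂ
    (postcompCLM (Complex.conjCLE : ℂ →L[ℝ] ℂ)
      (compCLMOfAntilipschitz ℝ (by fun_prop)
        (antilipschitzWith_const_add_smul x (a := -2⁻¹) (by norm_num)) g))
    (compCLMOfAntilipschitz ℂ (by fun_prop)
      (antilipschitzWith_const_add_smul x (a := 2⁻¹) (by norm_num)) f)

theorem wignerKernel_apply (f g : 𝓢(V, ℂ)) (x y : V) :
    wignerKernel f g x y = f (x + (2 : ℝ)⁻¹ • y) * conj (g (x - (2 : ℝ)⁻¹ • y)) := by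
  rw [wignerKernel, smulLeftCLM_apply_apply (hasTemperateGrowth _)]
  simp [neg_smul, ← sub_eq_add_neg, mul_comm]

end Wigner

variable {V E : Type*} [NormedAddCommGroup V] [InnerProductSpace ℝ V] [FiniteDimensional ℝ V]
  [MeasurableSpace V] [BorelSpace V] [NormedAddCommGroup E] [NormedSpace ℂ E] [CompleteSpace E]

theorem integral_fourier_eq_apply_zero (h : 𝓢(V, E)) : ∫ ξ, 𝓕 (h : V → E) ξ = h 0 := by
  calc ∫ ξ, 𝓕 (h : V → E) ξ = 𝓕⁻ (𝓕 (h : V → E)) 0 := by simp [Real.fourierInv_eq']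
    _ = h 0 := by rw [h.continuous.fourierInv_fourier_eq h.integrable (𝓕 h).integrable]

theorem integral_integral_cexp_neg_inner_smul (h : 𝓢(V, E)) :
    ∫ ξ, ∫ y, Complex.exp (-(⟪y, ξ⟫ : ℂ) * Complex.I) • h y =
      ((2 * Real.pi) ^ Module.finrank ℝ V : ℝ) • h 0 := by
  have hfourier (ξ : V) : ∫ y, Complex.exp (-(⟪y, ξ⟫ : ℂ) * Complex.I) • h y =
      𝓕 (h : V → E) ((2 * Real.pi)⁻¹ • ξ) := by
    rw [Real.fourier_eq']
    congr 1 with y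
    rw [real_inner_smul_right]
    field_simp
    push_cast
    ring_nf
  simp_rw [hfourier, Measure.integral_comp_inv_smul, integral_fourier_eq_apply_zero,
    abs_of_nonneg (by positivity : (0:ℝ) ≤ (2 * Real.pi) ^ Module.finrank ℝ V)]

end SchwartzMap

theorem integral_wig {d : ℕ} (f g : 𝓢(Ed d, ℂ)) (x : Ed d) :
    ∫ ξ, wig f g x ξ = (((2 * Real.pi) ^ ((d : ℝ) / 2) : ℝ) : ℂ) * (f x * conj (g x)) := by
  have hkernel := integral_integral_cexp_neg_inner_smul (wignerKernel f g x)
  simp only [wignerKernel_apply, smul_eq_mul, smul_zero, add_zero, sub_zero,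
    finrank_euclideanSpace_fin, Complex.real_smul] at hkernel
  simp_rw [mul_comm (Complex.exp _)] at hkernel
  have hconst : (2 * Real.pi) ^ (-(d : ℝ) / 2) * (2 * Real.pi) ^ d =
      (2 * Real.pi) ^ ((d : ℝ) / 2) := by
    rw [← Real.rpow_natCast, ← Real.rpow_add (by positivity)]
    ring_nf
  simp only [wig, integral_const_mul, hkernel, ← hconst]
  push_cast
  ring

theorem stmt11_general {Ω : Type} [MeasurableSpace Ω] (P : Measure Ω) [IsProbabilityMeasure P]
    {d : ℕ} (u : SchwartzMap (Ed d) ℂ →L⋆[ℂ] Lp ℂ 2 P)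
    (ν : Ed d → ℝ)
    -- `u` is frequency stationary: its covariance operator is multiplication by `x ↦ ν(−x)`
    (hfs : ∀ φ ψ : SchwartzMap (Ed d) ℂ,
      ∫ ω, u φ ω * conj (u ψ ω) ∂P =
        ∫ x : Ed d, ψ x * conj (φ x) * (ν (-x) : ℂ)) :
    -- the Wigner spectrum of `u` equals `(2π)^{-d/2} (ν∘(−id) ⊗ 1)`
    ∀ f g : SchwartzMap (Ed d) ℂ,
      ∫ ω, u f ω * conj (u g ω) ∂P =
        (((2 * Real.pi) ^ (-(d : ℝ) / 2) : ℝ) : ℂ) *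
          ∫ x : Ed d, ∫ ξ : Ed d, (ν (-x) : ℂ) * conj (wig f g x ξ) := by
  intro f g
  have hnorm : (((2 * Real.pi) ^ (-(d : ℝ) / 2) : ℝ) : ℂ) * ((2 * Real.pi) ^ ((d : ℝ) / 2) : ℝ)
      = 1 := by
    rw [← Complex.ofReal_mul, ← Real.rpow_add (by positivity), neg_div, neg_add_cancel,
      Real.rpow_zero, Complex.ofReal_one]
  simp_rw [integral_const_mul, integral_conj, integral_wig, ← integral_const_mul, hfs f g]
  congr 1 with x
  simp only [map_mul, Complex.conj_ofReal, Complex.conj_conj]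
  linear_combination -(g x * conj (f x) * (ν (-x) : ℂ)) * hnorm

theorem stmt11 {Ω : Type} [MeasurableSpace Ω] (P : Measure Ω) [IsProbabilityMeasure P]
    {d : ℕ} (u : SchwartzMap (Ed d) ℂ →L⋆[ℂ] Lp ℂ 2 P)
    (ν : Ed d → ℝ) (hν0 : ∀ x, 0 ≤ ν x) (hνc : Continuous ν)
    (hνb : ∃ C > 0, ∃ N : ℕ, ∀ x : Ed d, |ν x| ≤ C * (1 + ‖x‖) ^ N)
    -- `u` is frequency stationary: its covariance operator is multiplication by `x ↦ ν(−x)`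
    (hfs : ∀ φ ψ : SchwartzMap (Ed d) ℂ,
      ∫ ω, u φ ω * conj (u ψ ω) ∂P =
        ∫ x : Ed d, ψ x * conj (φ x) * (ν (-x) : ℂ)) :
    -- the Wigner spectrum of `u` equals `(2π)^{-d/2} (ν∘(−id) ⊗ 1)`
    ∀ f g : SchwartzMap (Ed d) ℂ,
      ∫ ω, u f ω * conj (u g ω) ∂P =
        (((2 * Real.pi) ^ (-(d : ℝ) / 2) : ℝ) : ℂ) *
          ∫ x : Ed d, ∫ ξ : Ed d, (ν (-x) : ℂ) * conj (wig f g x ξ) :=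
  stmt11_general P u ν hfs

end
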